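/- arXiv:1708.08400 — 2 statements merged into one kernel-verified Lean document; each statement's English description precedes it below -/
import Mathlib

section
/- Let g ≥ 1, k > g. Define for j = 1,…,g the finite sequence o(j) consisting of the numbers {2i : 0 ≤ i ≤ k} ∪ {2i + 2j − 1 : 0 ≤ i ≤ k−g−1} listed in strictly increasing order (vanishing orders at 0), and the sequence o'(j) consisting of {2k − 2i : 0 ≤ i ≤ k} ∪ {2k − 2i − 2j − 1 : 0 ≤ i ≤ k−g−1} listed in strictly increasing order (vanishing orders at ∞). Then for every j with 1 ≤ j ≤ g−1 and every index i with 0 ≤ i ≤ 2k−g, one has o'(j)_i + o(j+1)_{2k−g−i} = 2k. -/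
/-!
As sets, `o'(j)` and `o(j+1)` are both the union of the evens `0, 2, …, 2k` with a run of `k - g`
consecutive odd numbers, starting at `2(g - j) + 1` and `2j + 1` respectively. Such a sorted union
has an explicit piecewise-linear formula (`evenOddMerge`), and since the two offsets `g - j` and `j`
add up to `g`, the two formulas are complementary: the `m`-th entry of one plus the
`(2k - g - m)`-th entry of the other is always `2k`.
-/

/-- Vanishing orders of `H_j` at the point `0`, in strictly increasing order. -/
def ordSeqZero (k g j : ℕ) : List ℕ :=
  Finset.sort
    ((Finset.range (k+1)).image (fun i => 2*i) ∪
      (Finset.range (k-g)).image (fun i => 2*i + 2*j - 1)) (· ≤ ·)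

/-- Vanishing orders of `H_j` at the point `∞`, in strictly increasing order. -/
def ordSeqInf (k g j : ℕ) : List ℕ :=
  Finset.sort
    ((Finset.range (k+1)).image (fun i => 2*k - 2*i) ∪
      (Finset.range (k-g)).image (fun i => 2*k - 2*i - (2*j + 1))) (· ≤ ·)

/-- The `m`-th smallest element of `{2i : i ≤ k} ∪ {2(a+i)+1 : i < c}` when `a + c ≤ k`: the evens
`0, …, 2a`, then all integers `2a+1, …, 2a+2c`, then the remaining evens. -/
def evenOddMerge (a c m : ℕ) : ℕ :=
  if m ≤ a then 2 * m else if m ≤ a + 2 * c then m + a else 2 * (m - c)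

lemma evenOddMerge_strictMono (a c : ℕ) : StrictMono (evenOddMerge a c) := by
  refine strictMono_nat_of_lt_succ fun m => ?_
  unfold evenOddMerge
  split_ifs <;> omega

lemma toFinset_map_evenOddMerge_range {a c k : ℕ} (hac : a + c ≤ k) :
    ((List.range (k + c + 1)).map (evenOddMerge a c)).toFinset =
      (Finset.range (k + 1)).image (fun i => 2 * i) ∪
        (Finset.range c).image (fun i => 2 * (a + i) + 1) := by
  ext x
  simp only [List.mem_toFinset, List.mem_map, List.mem_range, Finset.mem_union, Finset.mem_image,
    Finset.mem_range]
  constructor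
  · rintro ⟨m, hm, rfl⟩
    unfold evenOddMerge
    split_ifs with h₁ h₂
    · exact Or.inl ⟨m, by omega, rfl⟩
    · rcases Nat.even_or_odd (m + a) with ⟨t, ht⟩ | ⟨t, ht⟩
      · exact Or.inl ⟨t, by omega, by omega⟩
      · exact Or.inr ⟨t - a, by omega, by omega⟩
    · exact Or.inl ⟨m - c, by omega, by omega⟩
  · rintro (⟨i, hi, rfl⟩ | ⟨i, hi, rfl⟩)
    · refine ⟨if i ≤ a then i else if i ≤ a + c then 2 * i - a else i + c, ?_, ?_⟩
      · split_ifs <;> omega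
      · unfold evenOddMerge
        split_ifs <;> omega
    · refine ⟨a + 1 + 2 * i, by omega, ?_⟩
      unfold evenOddMerge
      split_ifs <;> omega

lemma sort_evens_union_odds {a c k : ℕ} (hac : a + c ≤ k) :
    Finset.sort
        ((Finset.range (k + 1)).image (fun i => 2 * i) ∪
          (Finset.range c).image (fun i => 2 * (a + i) + 1)) (· ≤ ·) =
      (List.range (k + c + 1)).map (evenOddMerge a c) := by
  have hsorted : ((List.range (k + c + 1)).map (evenOddMerge a c)).Pairwise (· < ·) :=
    List.pairwise_map.mpr <|
      List.pairwise_lt_range.imp fun h => evenOddMerge_strictMono a c h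
  rw [← toFinset_map_evenOddMerge_range hac, List.toFinset_sort _ (hsorted.imp ne_of_lt)]
  exact hsorted.imp le_of_lt

lemma evenOddMerge_add_evenOddMerge_sub {a b c k m : ℕ} (habc : a + b + c = k) (hm : m ≤ k + c) :
    evenOddMerge a c m + evenOddMerge b c (k + c - m) = 2 * k := by
  unfold evenOddMerge
  split_ifs <;> omega

lemma Finset.image_range_eq_of_reflect {β : Type*} [DecidableEq β] {f f' : ℕ → β} {n : ℕ}
    (h : ∀ i < n, f' i = f (n - 1 - i)) :
    (Finset.range n).image f' = (Finset.range n).image f := by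
  conv_rhs => rw [← Finset.range_image_pred_top_sub n, Finset.image_image]
  exact Finset.image_congr fun i hi => h i (Finset.mem_range.mp hi)

lemma ordSeqZero_succ_eq {k g j : ℕ} (hgk : g ≤ k) (hjg : j ≤ g) :
    ordSeqZero k g (j + 1) = (List.range (k + (k - g) + 1)).map (evenOddMerge j (k - g)) := by
  rw [ordSeqZero, ← sort_evens_union_odds (by omega : j + (k - g) ≤ k)]
  congr 3
  funext i
  omega

lemma ordSeqInf_eq {k g j : ℕ} (hgk : g ≤ k) (hjg : j ≤ g) :
    ordSeqInf k g j = (List.range (k + (k - g) + 1)).map (evenOddMerge (g - j) (k - g)) := by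
  rw [ordSeqInf, ← sort_evens_union_odds (by omega : g - j + (k - g) ≤ k),
    Finset.image_range_eq_of_reflect (f' := fun i => 2 * k - 2 * i) (f := fun i => 2 * i)
      (fun i hi => by omega),
    Finset.image_range_eq_of_reflect (f' := fun i => 2 * k - 2 * i - (2 * j + 1))
      (f := fun i => 2 * (g - j + i) + 1) (fun i hi => by omega)]

theorem stmt_7_general (g k j : ℕ) (hk : g < k) (hjg : j ≤ g - 1) :
    ∀ i : ℕ, i ≤ 2*k - g →
      (ordSeqInf k g j).getD i 0 + (ordSeqZero k g (j+1)).getD (2*k - g - i) 0 = 2*k := by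
  intro i hi
  have hgk : g ≤ k := hk.le
  have hjg' : j ≤ g := hjg.trans (Nat.sub_le g 1)
  have hlen : 2 * k - g = k + (k - g) := by omega
  rw [hlen] at hi ⊢
  rw [ordSeqInf_eq hgk hjg', ordSeqZero_succ_eq hgk hjg',
    List.getD_eq_getElem _ _ (by simpa using Nat.lt_succ_of_le hi),
    List.getD_eq_getElem _ _ (by simp), List.getElem_map, List.getElem_map,
    List.getElem_range, List.getElem_range]
  exact evenOddMerge_add_evenOddMerge_sub (by omega) hi

/-- Compatibility in the points of attachment: `o'(j)_i + o(j+1)_{2k−g−i} = 2k`. -/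
theorem stmt_7 (g k j : ℕ) (hg : 1 ≤ g) (hk : g < k) (hj1 : 1 ≤ j) (hjg : j ≤ g - 1) :
    ∀ i : ℕ, i ≤ 2*k - g →
      (ordSeqInf k g j).getD i 0 + (ordSeqZero k g (j+1)).getD (2*k - g - i) 0 = 2*k :=
  stmt_7_general g k j hk hjg
end

section
/- Let F be a field of characteristic zero and D a derivation on a commutative F-algebra A containing an element u. For g ≥ 1, consider the g×g matrix M with entries M_{i,j} = D^j(u^i) for 1 ≤ i, j ≤ g. Then det M = c · (D u)^{binomial(g+1,2)} for some nonzero rational constant c depending only on g. -/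
set_option linter.unusedSectionVars false

open Finset

section aux

variable {F A : Type} [Field F] [CharZero F] [CommRing A] [Algebra F A]

/-- Universal Bell-type polynomials in the derivatives of `u`. -/
noncomputable def bellD (D : Derivation F A A) (u : A) : ℕ → ℕ → A
  | 0, k => if k = 0 then 1 else 0
  | (j+1), k => D (bellD D u j k) + (if k = 0 then 0 else D u * bellD D u j (k-1))

lemma bellD_succ (D : Derivation F A A) (u : A) (j k : ℕ) :
    bellD D u (j+1) k
      = D (bellD D u j k) + (if k = 0 then 0 else D u * bellD D u j (k-1)) := rfl

lemma bellD_eq_zero (D : Derivation F A A) (u : A) :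
    ∀ j k, j < k → bellD D u j k = 0
  | 0, k, h => by
      have : k ≠ 0 := by omega
      simp [bellD, this]
  | (j+1), k, h => by
      have h1 : bellD D u j k = 0 := bellD_eq_zero D u j k (by omega)
      have h2 : bellD D u j (k-1) = 0 := bellD_eq_zero D u j (k-1) (by omega)
      rw [bellD_succ, h1, h2]
      simp

lemma bellD_zero (D : Derivation F A A) (u : A) :
    ∀ j, bellD D u (j+1) 0 = 0
  | 0 => by
      rw [bellD_succ]
      simp [bellD]
  | (j+1) => by
      rw [bellD_succ, bellD_zero D u j]
      simp

lemma bellD_diag (D : Derivation F A A) (u : A) :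
    ∀ j, bellD D u j j = D u ^ j
  | 0 => by simp [bellD]
  | (j+1) => by
      rw [bellD_succ, bellD_eq_zero D u j (j+1) (by omega)]
      simp only [Nat.add_sub_cancel, map_zero, zero_add, Nat.succ_ne_zero, if_false]
      rw [bellD_diag D u j, pow_succ]
      ring

/-- Faà di Bruno formula for `D^[j] (u^i)`. -/
lemma faa (D : Derivation F A A) (u : A) (i : ℕ) :
    ∀ j, (⇑D)^[j] (u ^ i) =
      ∑ k ∈ Finset.range (j+1),
        (Nat.descFactorial i k : A) * u ^ (i - k) * bellD D u j k
  | 0 => by simp [bellD]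
  | (j+1) => by
      rw [Function.iterate_succ_apply', faa D u i j, map_sum]
      have lhs_eq : ∀ k ∈ Finset.range (j+1),
          D ((Nat.descFactorial i k : A) * u ^ (i - k) * bellD D u j k)
          = (Nat.descFactorial i k : A) * u ^ (i - k) * D (bellD D u j k)
            + (Nat.descFactorial i (k+1) : A) * u ^ (i - (k+1)) * (D u * bellD D u j k) := by
        intro k _
        rw [Derivation.leibniz, Derivation.leibniz, Derivation.map_natCast,
          Derivation.leibniz_pow]
        have h1 : (Nat.descFactorial i (k+1) : A)
            = ((i - k : ℕ) : A) * (Nat.descFactorial i k : A) := by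
          rw [Nat.descFactorial_succ]; push_cast; ring
        have h2 : i - (k + 1) = i - k - 1 := by omega
        rw [h1, h2]
        simp only [smul_eq_mul, nsmul_eq_mul, smul_smul]
        ring
      have e1 : ∑ k ∈ Finset.range (j+2),
          (Nat.descFactorial i k : A) * u ^ (i - k) * D (bellD D u j k)
          = ∑ k ∈ Finset.range (j+1),
            (Nat.descFactorial i k : A) * u ^ (i - k) * D (bellD D u j k) := by
        rw [Finset.sum_range_succ, bellD_eq_zero D u j (j+1) (by omega)]
        simp
      have e2 : ∑ k ∈ Finset.range (j+2),
          (Nat.descFactorial i k : A) * u ^ (i - k)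
            * (if k = 0 then 0 else D u * bellD D u j (k-1))
          = ∑ k ∈ Finset.range (j+1),
            (Nat.descFactorial i (k+1) : A) * u ^ (i - (k+1)) * (D u * bellD D u j k) := by
        rw [Finset.sum_range_succ' (fun k => (Nat.descFactorial i k : A) * u ^ (i - k)
            * (if k = 0 then 0 else D u * bellD D u j (k-1))) (j+1)]
        simp
      calc ∑ k ∈ Finset.range (j+1),
            D ((Nat.descFactorial i k : A) * u ^ (i - k) * bellD D u j k)
          = ∑ k ∈ Finset.range (j+1),
              ((Nat.descFactorial i k : A) * u ^ (i - k) * D (bellD D u j k)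
                + (Nat.descFactorial i (k+1) : A) * u ^ (i-(k+1)) * (D u * bellD D u j k)) :=
            Finset.sum_congr rfl lhs_eq
        _ = (∑ k ∈ Finset.range (j+1),
              (Nat.descFactorial i k : A) * u ^ (i - k) * D (bellD D u j k))
            + ∑ k ∈ Finset.range (j+1),
              (Nat.descFactorial i (k+1) : A) * u ^ (i-(k+1)) * (D u * bellD D u j k) :=
            Finset.sum_add_distrib
        _ = (∑ k ∈ Finset.range (j+2),
              (Nat.descFactorial i k : A) * u ^ (i - k) * D (bellD D u j k))
            + ∑ k ∈ Finset.range (j+2),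
              (Nat.descFactorial i k : A) * u ^ (i - k)
                * (if k = 0 then 0 else D u * bellD D u j (k-1)) := by rw [e1, e2]
        _ = ∑ k ∈ Finset.range (j+2),
              ((Nat.descFactorial i k : A) * u ^ (i - k) * D (bellD D u j k)
                + (Nat.descFactorial i k : A) * u ^ (i - k)
                  * (if k = 0 then 0 else D u * bellD D u j (k-1))) :=
            Finset.sum_add_distrib.symm
        _ = ∑ k ∈ Finset.range (j+2),
              (Nat.descFactorial i k : A) * u ^ (i - k) * bellD D u (j+1) k :=
            Finset.sum_congr rfl fun k _ => by rw [bellD_succ, mul_add]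

end aux

private lemma gauss_aux : ∀ n : ℕ, (∑ k ∈ Finset.range n, (k+1)) * 2 = n * (n+1)
  | 0 => by simp
  | (n+1) => by
      rw [Finset.sum_range_succ, add_mul, gauss_aux n]
      ring

/-- For a derivation `D` on a commutative `F`-algebra `A` (`F` of characteristic zero)
and `u ∈ A`, the determinant of the `g×g` matrix `(D^j(u^i))_{1 ≤ i,j ≤ g}` equals
`c·(D u)^{C(g+1,2)}` for some nonzero rational constant `c` depending only on `g`. -/
theorem stmt_12 (g : ℕ) (hg : 1 ≤ g) :
    ∃ c : ℚ, c ≠ 0 ∧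
      ∀ (F : Type) [Field F] [CharZero F] (A : Type) [CommRing A] [Algebra F A]
        (D : Derivation F A A) (u : A),
        (Matrix.of fun i j : Fin g => (⇑D)^[(j : ℕ) + 1] (u ^ ((i : ℕ) + 1))).det
          = algebraMap F A (algebraMap ℚ F c) * (D u) ^ Nat.choose (g+1) 2 := by
  refine ⟨(∏ i ∈ Finset.range g, Nat.factorial (i+1) : ℕ), ?_, ?_⟩
  · have : (∏ i ∈ Finset.range g, Nat.factorial (i+1)) ≠ 0 :=
      Finset.prod_ne_zero_iff.mpr fun i _ => Nat.factorial_ne_zero _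
    exact_mod_cast this
  intro F _ _ A _ _ D u
  set V : Matrix (Fin g) (Fin g) A :=
    Matrix.of fun i k : Fin g =>
      (Nat.descFactorial ((i:ℕ)+1) ((k:ℕ)+1) : A) * u ^ ((i:ℕ) - (k:ℕ)) with hV
  set B : Matrix (Fin g) (Fin g) A :=
    Matrix.of fun j k : Fin g => bellD D u ((j:ℕ)+1) ((k:ℕ)+1) with hB
  have hfac : (Matrix.of fun i j : Fin g => (⇑D)^[(j : ℕ) + 1] (u ^ ((i : ℕ) + 1)))
      = V * B.transpose := by
    ext i j
    rw [Matrix.mul_apply]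
    simp only [Matrix.of_apply, Matrix.transpose_apply, hV, hB]
    rw [faa D u ((i:ℕ)+1) ((j:ℕ)+1)]
    rw [Finset.sum_range_succ' (fun k => (Nat.descFactorial ((i:ℕ)+1) k : A)
        * u ^ ((i:ℕ)+1 - k) * bellD D u ((j:ℕ)+1) k) ((j:ℕ)+1)]
    rw [bellD_zero D u]
    simp only [mul_zero, add_zero]
    rw [Fin.sum_univ_eq_sum_range
      (fun k => (Nat.descFactorial ((i:ℕ)+1) (k+1) : A) * u ^ ((i:ℕ) - k)
        * bellD D u ((j:ℕ)+1) (k+1)) g]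
    have hsub : (j:ℕ)+1 ≤ g := j.2
    rw [← Finset.sum_range_add_sum_Ico
      (fun k => (Nat.descFactorial ((i:ℕ)+1) (k+1) : A) * u ^ ((i:ℕ) - k)
        * bellD D u ((j:ℕ)+1) (k+1)) hsub]
    have hz : ∀ k ∈ Finset.Ico ((j:ℕ)+1) g,
        (Nat.descFactorial ((i:ℕ)+1) (k+1) : A) * u ^ ((i:ℕ) - k)
          * bellD D u ((j:ℕ)+1) (k+1) = 0 := by
      intro k hk
      rw [Finset.mem_Ico] at hk
      rw [bellD_eq_zero D u ((j:ℕ)+1) (k+1) (by omega)]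
      ring
    rw [Finset.sum_congr rfl hz, Finset.sum_const_zero, add_zero]
    refine Finset.sum_congr rfl fun k _ => ?_
    have h3 : (i:ℕ)+1 - (k+1) = (i:ℕ) - k := by omega
    rw [h3]
  rw [hfac, Matrix.det_mul, Matrix.det_transpose]
  have hdetV : V.det = ∏ i : Fin g, (Nat.factorial ((i:ℕ)+1) : A) := by
    rw [Matrix.det_of_lowerTriangular]
    · refine Finset.prod_congr rfl fun i _ => ?_
      simp only [hV, Matrix.of_apply, Nat.sub_self, pow_zero, mul_one,
        Nat.descFactorial_self]
    · intro i j hij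
      simp only [hV, Matrix.of_apply]
      rw [Nat.descFactorial_of_lt (by exact_mod_cast Nat.add_lt_add_right hij 1)]
      simp
  have hdetB : B.det = (D u) ^ Nat.choose (g+1) 2 := by
    rw [Matrix.det_of_lowerTriangular]
    · have hdiag : ∀ j : Fin g, B j j = (D u) ^ ((j:ℕ)+1) := by
        intro j; simp [hB, bellD_diag]
      rw [Finset.prod_congr rfl fun j _ => hdiag j, Finset.prod_pow_eq_pow_sum]
      congr 1
      rw [Fin.sum_univ_eq_sum_range (fun k => k + 1) g]
      have h1 := gauss_aux g
      rw [Nat.choose_two_right, Nat.succ_sub_one, Nat.mul_comm]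
      omega
    · intro i j hij
      simp only [hB, Matrix.of_apply]
      exact bellD_eq_zero D u _ _ (by exact_mod_cast Nat.add_lt_add_right hij 1)
  rw [hdetV, hdetB]
  congr 1
  rw [map_natCast, map_natCast, Nat.cast_prod,
    ← Fin.prod_univ_eq_prod_range (fun i => (Nat.factorial (i+1) : A)) g]
end
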